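/- arXiv:2502.00176 — 4 statements merged into one kernel-verified Lean document; each statement's English description precedes it below -/
import Mathlib

section
/- Let 0 ≤ h ≤ k ≤ n be integers. Suppose S ⊆ [1,n]×[1,n] has exactly k points in every row and every column (i.e., |S| = kn and every horizontal and vertical grid line contains exactly k points), and every non-horizontal, non-vertical line contains at most k − h points of S. Then for every k' with 0 ≤ k − k' ≤ h, there exists S' ⊆ [1,n]×[1,n] with exactly k' points in every row and column such that every non-horizontal, non-vertical line contains at most k' − (h − (k − k')) points of S'. -/
/-!
A set with exactly `k` points on every row and column is a `k`-regular bipartite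
graph between rows and columns. By Hall's theorem (the Hall condition follows from double
counting) it contains a perfect matching; removing it leaves a `(k - 1)`-regular set, and
iterating gives a `k'`-regular subset `S' ⊆ S`. A generic line meets `S'` in at most as many
points as `S`, i.e. at most `k - h = k' - (h - (k - k'))`.
-/

open scoped Classical

/-- The integer grid `[1,n] × [1,n]`. -/
noncomputable def gridZ (n : ℕ) : Finset (ℤ × ℤ) := Finset.Icc (1, 1) ((n : ℤ), (n : ℤ))

open Finset

namespace Finset

variable {α β : Type*} [DecidableEq α] [DecidableEq β]

def IsLineRegular (S : Finset (α × β)) (X : Finset α) (Y : Finset β) (m : ℕ) : Prop :=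
  (∀ x ∈ X, #{p ∈ S | p.1 = x} = m) ∧ (∀ y ∈ Y, #{p ∈ S | p.2 = y} = m)

variable {S M : Finset (α × β)} {X : Finset α} {Y : Finset β} {m : ℕ}

lemma card_filter_fst_eq_card_bipartiteAbove (hS : S ⊆ X ×ˢ Y) (x : α) :
    #{p ∈ S | p.1 = x} = #(Y.bipartiteAbove (fun a b ↦ (a, b) ∈ S) x) :=
  card_nbij' Prod.snd (fun y ↦ (x, y))
    (fun p hp ↦ by
      simp only [coe_filter, Set.mem_ofPred_eq] at hp
      simp [bipartiteAbove, (mem_product.1 (hS hp.1)).2, ← hp.2, hp.1])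
    (fun y hy ↦ by simp_all [bipartiteAbove])
    (fun p hp ↦ Prod.ext (mem_filter.1 hp).2.symm rfl)
    (fun y _ ↦ rfl)

lemma card_filter_snd_eq_card_bipartiteBelow (hS : S ⊆ X ×ˢ Y) (y : β) :
    #{p ∈ S | p.2 = y} = #(X.bipartiteBelow (fun a b ↦ (a, b) ∈ S) y) :=
  card_nbij' Prod.fst (fun x ↦ (x, y))
    (fun p hp ↦ by
      simp only [coe_filter, Set.mem_ofPred_eq] at hp
      simp [bipartiteBelow, (mem_product.1 (hS hp.1)).1, ← hp.2, hp.1])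
    (fun x hx ↦ by simp_all [bipartiteBelow])
    (fun p hp ↦ Prod.ext rfl (mem_filter.1 hp).2.symm)
    (fun x _ ↦ rfl)

namespace IsLineRegular

lemma card_eq_card (hS : S ⊆ X ×ˢ Y) (hreg : IsLineRegular S X Y m) (hm : m ≠ 0) :
    #X = #Y := by
  refine Nat.eq_of_mul_eq_mul_right (Nat.pos_of_ne_zero hm)
    (card_mul_eq_card_mul (fun a b ↦ (a, b) ∈ S) ?_ ?_)
  · intro x hx
    rw [← card_filter_fst_eq_card_bipartiteAbove hS, hreg.1 x hx]
  · intro y hy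
    rw [← card_filter_snd_eq_card_bipartiteBelow hS, hreg.2 y hy]

/-- Hall's condition for the rows, by double counting the points in the rows `A` against the
columns meeting them. -/
lemma card_le_card_biUnion (hS : S ⊆ X ×ˢ Y) (hreg : IsLineRegular S X Y m) (hm : m ≠ 0)
    (A : Finset X) :
    #A ≤ #(A.biUnion fun x ↦ Y.bipartiteAbove (fun a b ↦ (a, b) ∈ S) x) := by
  set t : X → Finset β := fun x ↦ Y.bipartiteAbove (fun a b ↦ (a, b) ∈ S) x
  set r : X → β → Prop := fun a b ↦ (a.1, b) ∈ S
  refine Nat.le_of_mul_le_mul_right (card_mul_le_card_mul r (m := m) (n := m) ?_ ?_)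
    (Nat.pos_of_ne_zero hm)
  · intro x hx
    have hsub : t x ⊆ A.biUnion t := subset_biUnion_of_mem t hx
    rw [← hreg.1 x x.2, card_filter_fst_eq_card_bipartiteAbove hS]
    exact card_le_card fun y hy ↦
      (mem_bipartiteAbove _).2 ⟨hsub hy, ((mem_bipartiteAbove _).1 hy).2⟩
  · intro y hy
    obtain ⟨x, -, hxy⟩ := mem_biUnion.1 hy
    rw [← hreg.2 y ((mem_bipartiteAbove _).1 hxy).1, card_filter_snd_eq_card_bipartiteBelow hS]
    calc #(A.bipartiteBelow r y) = #((A.bipartiteBelow r y).map (Function.Embedding.subtype _)) :=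
          (card_map _).symm
      _ ≤ _ := card_le_card fun x hx ↦ by
          obtain ⟨a, ha, rfl⟩ := mem_map.1 hx
          exact (mem_bipartiteBelow _).2 ⟨a.2, ((mem_bipartiteBelow r).1 ha).2⟩

lemma exists_subset_isLineRegular_one (hS : S ⊆ X ×ˢ Y) (hreg : IsLineRegular S X Y m)
    (hm : m ≠ 0) : ∃ M ⊆ S, IsLineRegular M X Y 1 := by
  obtain ⟨f, hf_inj, hf_mem⟩ := (all_card_le_biUnion_card_iff_exists_injective
    fun x : X ↦ Y.bipartiteAbove (fun a b ↦ (a, b) ∈ S) x).1 (hreg.card_le_card_biUnion hS hm)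
  have hfY (x : X) : f x ∈ Y := ((mem_bipartiteAbove _).1 (hf_mem x)).1
  have hfS (x : X) : (x.1, f x) ∈ S := ((mem_bipartiteAbove _).1 (hf_mem x)).2
  have hf_surj (y : β) (hy : y ∈ Y) : ∃ x, f x = y := by
    obtain ⟨x, -, hx⟩ := surj_on_of_inj_on_of_card_le (s := X.attach) (fun x _ ↦ f x)
      (fun x _ ↦ hfY x) (fun _ _ _ _ h ↦ hf_inj h)
      (by rw [card_attach, hreg.card_eq_card hS hm]) y hy
    exact ⟨x, hx.symm⟩
  refine ⟨X.attach.image fun x ↦ (x.1, f x), ?_, ?_, ?_⟩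
  · exact image_subset_iff.2 fun x _ ↦ hfS x
  · intro x hx
    rw [card_eq_one]
    refine ⟨(x, f ⟨x, hx⟩), ?_⟩
    ext p
    simp only [mem_filter, mem_image, mem_attach, true_and, mem_singleton]
    constructor
    · rintro ⟨⟨a, rfl⟩, rfl⟩
      rfl
    · rintro rfl
      exact ⟨⟨⟨x, hx⟩, rfl⟩, rfl⟩
  · intro y hy
    obtain ⟨x, rfl⟩ := hf_surj y hy
    rw [card_eq_one]
    refine ⟨(x.1, f x), ?_⟩
    ext p
    simp only [mem_filter, mem_image, mem_attach, true_and, mem_singleton]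
    constructor
    · rintro ⟨⟨a, rfl⟩, hax⟩
      rw [hf_inj hax]
    · rintro rfl
      exact ⟨⟨x, rfl⟩, rfl⟩

lemma sdiff {n : ℕ} (hMS : M ⊆ S) (hS : IsLineRegular S X Y m) (hM : IsLineRegular M X Y n) :
    IsLineRegular (S \ M) X Y (m - n) := by
  have filter_sdiff (P : α × β → Prop) [DecidablePred P] :
      {p ∈ S \ M | P p} = {p ∈ S | P p} \ {p ∈ M | P p} := by
    ext p
    simp only [mem_filter, mem_sdiff]
    tauto
  constructor
  · intro x hx
    rw [filter_sdiff, card_sdiff_of_subset (filter_subset_filter _ hMS), hS.1 x hx, hM.1 x hx]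
  · intro y hy
    rw [filter_sdiff, card_sdiff_of_subset (filter_subset_filter _ hMS), hS.2 y hy, hM.2 y hy]

lemma exists_subset_of_le (hS : S ⊆ X ×ˢ Y) (hreg : IsLineRegular S X Y m) {k : ℕ}
    (hk : k ≤ m) : ∃ S' ⊆ S, IsLineRegular S' X Y k := by
  induction m generalizing S with
  | zero => exact ⟨S, subset_rfl, Nat.le_zero.1 hk ▸ hreg⟩
  | succ m ih =>
    obtain rfl | hk := eq_or_lt_of_le hk
    · exact ⟨S, subset_rfl, hreg⟩
    obtain ⟨M, hMS, hM⟩ := exists_subset_isLineRegular_one hS hreg m.succ_ne_zero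
    obtain ⟨S', hS'M, hS'⟩ :=
      ih (sdiff_subset.trans hS) (hreg.sdiff hMS hM) (Nat.le_of_lt_succ hk)
    exact ⟨S', hS'M.trans sdiff_subset, hS'⟩

end IsLineRegular

end Finset

theorem stmt3_general (n k h : ℕ)
    (S : Finset (ℤ × ℤ)) (hsub : S ⊆ gridZ n)
    (hrow : ∀ y ∈ Finset.Icc (1 : ℤ) (n : ℤ), (S.filter (fun p => p.2 = y)).card = k)
    (hcol : ∀ x ∈ Finset.Icc (1 : ℤ) (n : ℤ), (S.filter (fun p => p.1 = x)).card = k)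
    (hgen : ∀ a b c : ℝ, a ≠ 0 → b ≠ 0 →
      (S.filter (fun p => a * (p.1 : ℝ) + b * (p.2 : ℝ) = c)).card ≤ k - h)
    (k' : ℕ) (hk' : k' ≤ k) (hkk' : k - k' ≤ h) :
    ∃ S' : Finset (ℤ × ℤ), S' ⊆ gridZ n ∧
      (∀ y ∈ Finset.Icc (1 : ℤ) (n : ℤ), (S'.filter (fun p => p.2 = y)).card = k') ∧
      (∀ x ∈ Finset.Icc (1 : ℤ) (n : ℤ), (S'.filter (fun p => p.1 = x)).card = k') ∧
      (∀ a b c : ℝ, a ≠ 0 → b ≠ 0 →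
        (S'.filter (fun p => a * (p.1 : ℝ) + b * (p.2 : ℝ) = c)).card ≤ k' - (h - (k - k'))) := by
  obtain ⟨S', hS'S, hcol', hrow'⟩ :=
    IsLineRegular.exists_subset_of_le (X := Icc 1 (n : ℤ)) (Y := Icc 1 (n : ℤ)) hsub
      ⟨hcol, hrow⟩ hk'
  refine ⟨S', hS'S.trans hsub, hrow', hcol', fun a b c ha hb ↦ ?_⟩
  have hline := (card_le_card (filter_subset_filter _ hS'S)).trans (hgen a b c ha hb)
  omega

/-- Adjusting k: from a k-regular no-(k+1)-in-line set with reserve h on generic lines,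
one obtains a k'-regular set with reserve h' = h - (k - k'). -/
theorem stmt3 (n k h : ℕ) (hh : h ≤ k) (hk : k ≤ n)
    (S : Finset (ℤ × ℤ)) (hsub : S ⊆ gridZ n)
    (hrow : ∀ y ∈ Finset.Icc (1 : ℤ) (n : ℤ), (S.filter (fun p => p.2 = y)).card = k)
    (hcol : ∀ x ∈ Finset.Icc (1 : ℤ) (n : ℤ), (S.filter (fun p => p.1 = x)).card = k)
    (hgen : ∀ a b c : ℝ, a ≠ 0 → b ≠ 0 →
      (S.filter (fun p => a * (p.1 : ℝ) + b * (p.2 : ℝ) = c)).card ≤ k - h)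
    (k' : ℕ) (hk' : k' ≤ k) (hkk' : k - k' ≤ h) :
    ∃ S' : Finset (ℤ × ℤ), S' ⊆ gridZ n ∧
      (∀ y ∈ Finset.Icc (1 : ℤ) (n : ℤ), (S'.filter (fun p => p.2 = y)).card = k') ∧
      (∀ x ∈ Finset.Icc (1 : ℤ) (n : ℤ), (S'.filter (fun p => p.1 = x)).card = k') ∧
      (∀ a b c : ℝ, a ≠ 0 → b ≠ 0 →
        (S'.filter (fun p => a * (p.1 : ℝ) + b * (p.2 : ℝ) = c)).card ≤ k' - (h - (k - k'))) :=
  stmt3_general n k h S hsub hrow hcol hgen k' hk' hkk'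
end

section
/- Let 0 ≤ h ≤ k ≤ n be integers with h even, and let n' = n + h/2. Suppose S ⊆ [1,n]×[1,n] contains exactly k points in every row and column, and every non-horizontal, non-vertical line contains at most k − h points of S. Then there exists S'' ⊆ [1,n']×[1,n'] of size k·n' such that every line in the plane contains at most k points of S''. -/
open scoped Classical

/-!
Write `h = 2q`. By Hall's theorem a `k`-regular bipartite set contains a perfect matching whose
complement is `(k-1)`-regular, so `S` contains `q` disjoint perfect matchings, coloured by the new
coordinates `n+1, …, n+q`. Keep from each matching its `k` points in the rows `y ≤ k` and move
every such point `p` of colour `j` to both `(p.1, j)` and `(j, p.2)`. Each old row and column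
gains as many points as it lost, and each of the `2q` new lines receives `k` points, so the new
set is `k`-regular on `[1, n+q]`: it has `k(n+q)` points and at most `k` on any axis-parallel
line. A generic line meets each new line at most once, so it gains at most `2q = h` points over
the at most `k - h` it had in `S`.
-/

open Finset

variable {ι α β γ : Type*}

theorem card_filter_sdiff_of_subset [DecidableEq ι] {s t : Finset ι} (h : t ⊆ s) (q : ι → Prop)
    [DecidablePred q] : #{i ∈ s \ t | q i} = #{i ∈ s | q i} - #{i ∈ t | q i} := by
  rw [← card_sdiff_of_subset (filter_subset_filter q h)]
  congr 1
  ext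
  simp only [mem_filter, mem_sdiff]
  tauto

def IsPartialMatching (P : Finset (α × β)) : Prop :=
  Set.InjOn Prod.fst (P : Set (α × β)) ∧ Set.InjOn Prod.snd (P : Set (α × β))

theorem IsPartialMatching.mono {P Q : Finset (α × β)} (hPQ : P ⊆ Q) (hQ : IsPartialMatching Q) :
    IsPartialMatching P :=
  ⟨hQ.1.mono (coe_subset.2 hPQ), hQ.2.mono (coe_subset.2 hPQ)⟩

section Biregular

variable [DecidableEq α] [DecidableEq β] {S P : Finset (α × β)} {X : Finset α} {Y : Finset β}
  {k m : ℕ}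

def IsBiregular (S : Finset (α × β)) (X : Finset α) (Y : Finset β) (k : ℕ) : Prop :=
  (∀ x ∈ X, #{p ∈ S | p.1 = x} = k) ∧ ∀ y ∈ Y, #{p ∈ S | p.2 = y} = k

theorem IsBiregular.card_filter_fst_le (hS : S ⊆ X ×ˢ Y) (h : IsBiregular S X Y k) (x : α) :
    #{p ∈ S | p.1 = x} ≤ k := by
  by_cases hx : x ∈ X
  · exact (h.1 x hx).le
  · rw [filter_false_of_mem fun p hp (hpx : p.1 = x) => hx (hpx ▸ (mem_product.1 (hS hp)).1)]
    exact Nat.zero_le k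

theorem IsBiregular.card_filter_snd_le (hS : S ⊆ X ×ˢ Y) (h : IsBiregular S X Y k) (y : β) :
    #{p ∈ S | p.2 = y} ≤ k := by
  by_cases hy : y ∈ Y
  · exact (h.2 y hy).le
  · rw [filter_false_of_mem fun p hp (hpy : p.2 = y) => hy (hpy ▸ (mem_product.1 (hS hp)).2)]
    exact Nat.zero_le k

theorem IsBiregular.sdiff (hPS : P ⊆ S) (hS : IsBiregular S X Y k) (hP : IsBiregular P X Y m) :
    IsBiregular (S \ P) X Y (k - m) :=
  ⟨fun x hx => by rw [card_filter_sdiff_of_subset hPS, hS.1 x hx, hP.1 x hx],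
    fun y hy => by rw [card_filter_sdiff_of_subset hPS, hS.2 y hy, hP.2 y hy]⟩

theorem IsBiregular.isPartialMatching (hS : S ⊆ X ×ˢ Y) (h : IsBiregular S X Y 1) :
    IsPartialMatching S := by
  refine ⟨fun p hp p' hp' hpp' => ?_, fun p hp p' hp' hpp' => ?_⟩
  · exact card_le_one.1 (h.1 p.1 (mem_product.1 (hS hp)).1).le p (mem_filter.2 ⟨hp, rfl⟩)
      p' (mem_filter.2 ⟨hp', hpp'.symm⟩)
  · exact card_le_one.1 (h.2 p.2 (mem_product.1 (hS hp)).2).le p (mem_filter.2 ⟨hp, rfl⟩)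
      p' (mem_filter.2 ⟨hp', hpp'.symm⟩)

theorem IsBiregular.card_filter_fst_mem (h : IsBiregular S X Y k) {W : Finset α} (hW : W ⊆ X) :
    #{p ∈ S | p.1 ∈ W} = #W * k := by
  rw [← sum_card_fiberwise_eq_card_filter, sum_const_nat fun x hx => h.1 x (hW hx)]

theorem IsBiregular.card_filter_snd_mem (h : IsBiregular S X Y k) {W : Finset β} (hW : W ⊆ Y) :
    #{p ∈ S | p.2 ∈ W} = #W * k := by
  rw [← sum_card_fiberwise_eq_card_filter, sum_const_nat fun y hy => h.2 y (hW hy)]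

theorem IsBiregular.card_eq_card_right_mul (hS : S ⊆ X ×ˢ Y) (h : IsBiregular S X Y k) :
    #S = #Y * k := by
  rw [← h.card_filter_snd_mem subset_rfl, filter_true_of_mem fun p hp => (mem_product.1 (hS hp)).2]

theorem IsBiregular.card_eq_card_left_mul (hS : S ⊆ X ×ˢ Y) (h : IsBiregular S X Y k) :
    #S = #X * k := by
  rw [← h.card_filter_fst_mem subset_rfl, filter_true_of_mem fun p hp => (mem_product.1 (hS hp)).1]

/-- Hall's condition: the `#s * k` points of `S` in the rows `s` lie among the `#N * k` points in
the columns `N` that they reach. -/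
theorem IsBiregular.card_le_card_biUnion (hS : S ⊆ X ×ˢ Y) (h : IsBiregular S X Y k)
    (hk : 0 < k) (s : Finset Y) :
    #s ≤ #(s.biUnion fun y => {p ∈ S | p.2 = y.1}.image Prod.fst) := by
  set N := s.biUnion fun y => {p ∈ S | p.2 = y.1}.image Prod.fst
  have hrows : {p ∈ S | p.2 ∈ s.map (Function.Embedding.subtype _)} ⊆ {p ∈ S | p.1 ∈ N} := by
    intro p hp
    obtain ⟨hpS, hp2⟩ := mem_filter.1 hp
    obtain ⟨y, hy, hyp⟩ := mem_map.1 hp2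
    exact mem_filter.2 ⟨hpS, mem_biUnion.2 ⟨y, hy, mem_image.2
      ⟨p, mem_filter.2 ⟨hpS, hyp.symm⟩, rfl⟩⟩⟩
  have hsY : s.map (Function.Embedding.subtype _) ⊆ Y := fun y hy => by
    obtain ⟨y', -, rfl⟩ := mem_map.1 hy
    exact y'.2
  have hNX : N ⊆ X := fun x hx => by
    obtain ⟨y, -, hxy⟩ := mem_biUnion.1 hx
    obtain ⟨p, hp, rfl⟩ := mem_image.1 hxy
    exact (mem_product.1 (hS (mem_filter.1 hp).1)).1
  have := card_le_card hrows
  rw [h.card_filter_snd_mem hsY, h.card_filter_fst_mem hNX, card_map] at this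
  exact Nat.le_of_mul_le_mul_right this hk

theorem IsBiregular.exists_subset_isBiregular_one (hS : S ⊆ X ×ˢ Y) (h : IsBiregular S X Y k)
    (hk : 0 < k) : ∃ P ⊆ S, IsBiregular P X Y 1 := by
  obtain ⟨f, hf_inj, hf⟩ :=
    (all_card_le_biUnion_card_iff_exists_injective _).1 (h.card_le_card_biUnion hS hk)
  have hfS : ∀ y, (f y, y.1) ∈ S := fun y => by
    obtain ⟨p, hp, hpf⟩ := mem_image.1 (hf y)
    obtain ⟨hpS, hpy⟩ := mem_filter.1 hp
    rwa [← hpf, ← hpy]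
  have hf_surj : ∀ x ∈ X, ∃ y, f y = x := by
    intro x hx
    obtain ⟨y, hy, rfl⟩ := surj_on_of_inj_on_of_card_le (fun y hy => f ⟨y, hy⟩)
      (fun y hy => (mem_product.1 (hS (hfS ⟨y, hy⟩))).1)
      (fun _ _ _ _ he => congrArg Subtype.val (hf_inj he))
      (Nat.le_of_mul_le_mul_right
        ((h.card_eq_card_left_mul hS).symm.trans (h.card_eq_card_right_mul hS)).le hk) x hx
    exact ⟨_, rfl⟩
  refine ⟨univ.image fun y => (f y, y.1), fun p hp => ?_, fun x hx => ?_, fun y hy => ?_⟩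
  · obtain ⟨y, -, rfl⟩ := mem_image.1 hp
    exact hfS y
  · obtain ⟨y, rfl⟩ := hf_surj x hx
    refine card_eq_one.2 ⟨(f y, y.1), ext fun p => ?_⟩
    simp only [mem_filter, mem_image, mem_univ, true_and, mem_singleton]
    constructor
    · rintro ⟨⟨y', rfl⟩, he⟩
      rw [hf_inj he]
    · rintro rfl
      exact ⟨⟨y, rfl⟩, rfl⟩
  · refine card_eq_one.2 ⟨(f ⟨y, hy⟩, y), ext fun p => ?_⟩
    simp only [mem_filter, mem_image, mem_univ, true_and, mem_singleton]
    constructor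
    · rintro ⟨⟨y', rfl⟩, rfl⟩
      rfl
    · rintro rfl
      exact ⟨⟨⟨y, hy⟩, rfl⟩, rfl⟩

end Biregular

section OneFactorization

variable [DecidableEq α] [DecidableEq β] [DecidableEq γ] {S R : Finset (α × β)} {X : Finset α}
  {Y : Finset β} {c : α × β → γ} {J : Finset γ} {k : ℕ}

def IsOneFactorization (R : Finset (α × β)) (c : α × β → γ) (X : Finset α) (Y : Finset β)
    (J : Finset γ) : Prop :=
  (∀ p ∈ R, c p ∈ J) ∧ ∀ j ∈ J, IsBiregular {p ∈ R | c p = j} X Y 1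

theorem IsOneFactorization.isBiregular (hR : IsOneFactorization R c X Y J) :
    IsBiregular R X Y #J := by
  refine ⟨fun x hx => ?_, fun y hy => ?_⟩
  · rw [card_eq_sum_card_fiberwise fun p hp => hR.1 p (mem_filter.1 hp).1, ← mul_one #J]
    exact sum_const_nat fun j hj => by rw [filter_comm]; exact (hR.2 j hj).1 x hx
  · rw [card_eq_sum_card_fiberwise fun p hp => hR.1 p (mem_filter.1 hp).1, ← mul_one #J]
    exact sum_const_nat fun j hj => by rw [filter_comm]; exact (hR.2 j hj).2 y hy

theorem IsBiregular.exists_isOneFactorization [Nonempty γ] (hS : S ⊆ X ×ˢ Y)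
    (h : IsBiregular S X Y k) (J : Finset γ) (hJ : #J ≤ k) :
    ∃ R ⊆ S, ∃ c : α × β → γ, IsOneFactorization R c X Y J := by
  induction J using Finset.induction_on with
  | empty => exact ⟨∅, empty_subset S, fun _ => Classical.arbitrary γ, by simp [IsOneFactorization]⟩
  | insert j J hj ih =>
    rw [card_insert_of_notMem hj] at hJ
    obtain ⟨R, hRS, c, hR⟩ := ih (by omega)
    obtain ⟨P, hP, hPreg⟩ := (h.sdiff hRS hR.isBiregular).exists_subset_isBiregular_one
      (fun p hp => hS (mem_sdiff.1 hp).1) (by omega)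
    have hPR : ∀ p ∈ P, p ∉ R := fun p hp => (mem_sdiff.1 (hP hp)).2
    refine ⟨R ∪ P, union_subset hRS fun p hp => (mem_sdiff.1 (hP hp)).1,
      fun p => if p ∈ P then j else c p, fun p hp => ?_, fun j' hj' => ?_⟩
    · by_cases hpP : p ∈ P
      · simp [hpP]
      · simp [hpP, hR.1 p ((mem_union.1 hp).resolve_right hpP)]
    · rcases mem_insert.1 hj' with rfl | hj'
      · convert hPreg using 1
        ext p
        by_cases hpP : p ∈ P
        · simp [hpP]
        · simp only [mem_filter, mem_union, hpP, if_false, or_false, iff_false, not_and]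
          exact fun hp hc => hj (hc ▸ hR.1 p hp)
      · convert hR.2 j' hj' using 1
        ext p
        by_cases hpP : p ∈ P
        · simp only [mem_filter, mem_union, hPR p hpP, hpP, or_true, ↓reduceIte, true_and,
            false_and, iff_false]
          exact fun he => hj (he ▸ hj')
        · simp [hpP]

end OneFactorization

theorem IsOneFactorization.restrict [DecidableEq α] [DecidableEq β] [DecidableEq γ]
    {R : Finset (α × β)} {c : α × β → γ} {X : Finset α} {Y : Finset β} {J : Finset γ}
    (hRXY : R ⊆ X ×ˢ Y) (hR : IsOneFactorization R c X Y J) {K : Finset β} (hK : K ⊆ Y) (j : γ)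
    (hj : j ∈ J) :
    IsPartialMatching {p ∈ {p ∈ R | p.2 ∈ K} | c p = j} ∧
      #{p ∈ {p ∈ R | p.2 ∈ K} | c p = j} = #K := by
  rw [filter_comm, ← mul_one #K]
  exact ⟨((hR.2 j hj).isPartialMatching ((filter_subset _ R).trans hRXY)).mono (filter_subset _ _),
    (hR.2 j hj).card_filter_snd_mem hK⟩

section Extension

variable [DecidableEq α] {S M : Finset (α × α)} {X J : Finset α} {c : α × α → α} {k : ℕ}

def extendByProjections (S M : Finset (α × α)) (c : α × α → α) : Finset (α × α) :=
  S \ M ∪ M.image (fun p => (p.1, c p)) ∪ M.image (fun p => (c p, p.2))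

theorem card_filter_extendByProjections (hS : S ⊆ X ×ˢ X) (hXJ : Disjoint X J) (hMS : M ⊆ S)
    (hc : ∀ p ∈ M, c p ∈ J) (hM : ∀ j ∈ J, IsPartialMatching {p ∈ M | c p = j})
    (q : α × α → Prop) [DecidablePred q] :
    #{p ∈ extendByProjections S M c | q p}
      = #{p ∈ S \ M | q p} + #{p ∈ M | q (p.1, c p)} + #{p ∈ M | q (c p, p.2)} := by
  have hX : ∀ p ∈ S, p.1 ∈ X ∧ p.2 ∈ X := fun p hp => mem_product.1 (hS hp)
  have hJX : ∀ {v}, v ∈ J → v ∉ X := fun hv hvX => disjoint_left.1 hXJ hvX hv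
  have hrow : Disjoint (S \ M) (M.image fun p => (p.1, c p)) := by
    refine disjoint_left.2 fun p hp hpA => ?_
    obtain ⟨p', hp', rfl⟩ := mem_image.1 hpA
    exact hJX (hc p' hp') (hX _ (mem_sdiff.1 hp).1).2
  have hcol : Disjoint (S \ M ∪ M.image fun p => (p.1, c p)) (M.image fun p => (c p, p.2)) := by
    refine disjoint_left.2 fun p hp hpB => ?_
    obtain ⟨p', hp', rfl⟩ := mem_image.1 hpB
    rcases mem_union.1 hp with hp | hpA
    · exact hJX (hc p' hp') (hX _ (mem_sdiff.1 hp).1).1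
    · obtain ⟨p'', hp'', he⟩ := mem_image.1 hpA
      have hfst : p''.1 = c p' := (Prod.ext_iff.1 he).1
      exact hJX (hc p' hp') (hfst ▸ (hX p'' (hMS hp'')).1)
  have hinj1 : Set.InjOn (fun p => (p.1, c p)) M := fun p hp p' hp' he =>
    (hM (c p) (hc p hp)).1 (mem_filter.2 ⟨hp, rfl⟩)
      (mem_filter.2 ⟨hp', (Prod.ext_iff.1 he).2.symm⟩) (Prod.ext_iff.1 he).1
  have hinj2 : Set.InjOn (fun p => (c p, p.2)) M := fun p hp p' hp' he =>
    (hM (c p) (hc p hp)).2 (mem_filter.2 ⟨hp, rfl⟩)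
      (mem_filter.2 ⟨hp', (Prod.ext_iff.1 he).1.symm⟩) (Prod.ext_iff.1 he).2
  rw [extendByProjections, filter_union, card_union_of_disjoint (disjoint_filter_filter hcol),
    filter_union, card_union_of_disjoint (disjoint_filter_filter hrow), filter_image, filter_image,
    card_image_of_injOn (hinj1.mono (coe_subset.2 (filter_subset _ M))),
    card_image_of_injOn (hinj2.mono (coe_subset.2 (filter_subset _ M)))]

theorem extendByProjections_subset (hS : S ⊆ X ×ˢ X) (hMS : M ⊆ S) (hc : ∀ p ∈ M, c p ∈ J) :
    extendByProjections S M c ⊆ (X ∪ J) ×ˢ (X ∪ J) := by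
  have hX : ∀ p ∈ S, p.1 ∈ X ∧ p.2 ∈ X := fun p hp => mem_product.1 (hS hp)
  intro p hp
  simp only [extendByProjections, mem_union, mem_sdiff, mem_image] at hp
  rcases hp with (⟨hpS, -⟩ | ⟨p, hp, rfl⟩) | ⟨p, hp, rfl⟩ <;> simp only [mem_product, mem_union]
  · exact ⟨.inl (hX p hpS).1, .inl (hX p hpS).2⟩
  · exact ⟨.inl (hX p (hMS hp)).1, .inr (hc p hp)⟩
  · exact ⟨.inr (hc p hp), .inl (hX p (hMS hp)).2⟩

theorem isBiregular_extendByProjections (hS : S ⊆ X ×ˢ X) (hXJ : Disjoint X J) (hMS : M ⊆ S)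
    (hc : ∀ p ∈ M, c p ∈ J)
    (hM : ∀ j ∈ J, IsPartialMatching {p ∈ M | c p = j} ∧ #{p ∈ M | c p = j} = k)
    (hreg : IsBiregular S X X k) :
    IsBiregular (extendByProjections S M c) (X ∪ J) (X ∪ J) k := by
  have hcard := card_filter_extendByProjections hS hXJ hMS hc fun j hj => (hM j hj).1
  have hX : ∀ p ∈ S, p.1 ∈ X ∧ p.2 ∈ X := fun p hp => mem_product.1 (hS hp)
  have hcolor : ∀ v ∈ X, #{p ∈ M | c p = v} = 0 := fun v hv =>
    card_eq_zero.2 (filter_false_of_mem fun p hp h => disjoint_left.1 hXJ hv (h ▸ hc p hp))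
  have hcount (g : α × α → α) (hg : ∀ x ∈ X, #{p ∈ S | g p = x} = k) (hgX : ∀ p ∈ S, g p ∈ X)
      (v : α) (hv : v ∈ X ∪ J) :
      #{p ∈ S | g p = v} - #{p ∈ M | g p = v} + #{p ∈ M | g p = v} + #{p ∈ M | c p = v} = k := by
    have hle := card_le_card (filter_subset_filter (g · = v) hMS)
    rcases mem_union.1 hv with hvX | hvJ
    · rw [hg v hvX] at hle ⊢
      rw [hcolor v hvX]
      omega
    · have hSv : #{p ∈ S | g p = v} = 0 := card_eq_zero.2 <| filter_false_of_mem
        fun p hp (h : g p = v) => disjoint_right.1 hXJ hvJ (h ▸ hgX p hp)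
      rw [hSv] at hle ⊢
      rw [(hM v hvJ).2]
      omega
  refine ⟨fun v hv => ?_, fun v hv => ?_⟩
  · rw [hcard, card_filter_sdiff_of_subset hMS]
    exact hcount Prod.fst hreg.1 (fun p hp => (hX p hp).1) v hv
  · rw [hcard, card_filter_sdiff_of_subset hMS, add_right_comm]
    exact hcount Prod.snd hreg.2 (fun p hp => (hX p hp).2) v hv

end Extension

section Lines

variable {T : Finset (ℤ × ℤ)} {a b d : ℝ}

theorem card_filter_line_le_of_snd_mem {J : Finset ℤ} (ha : a ≠ 0) (hT : ∀ p ∈ T, p.2 ∈ J) :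
    #{p ∈ T | a * (p.1 : ℝ) + b * (p.2 : ℝ) = d} ≤ #J := by
  refine card_le_card_of_injOn Prod.snd (fun p hp => hT p (mem_filter.1 hp).1)
    fun p hp p' hp' (he : p.2 = p'.2) => Prod.ext ?_ he
  have h := (mem_filter.1 hp).2.trans (mem_filter.1 hp').2.symm
  rw [he] at h
  exact_mod_cast mul_left_cancel₀ ha (add_right_cancel h)

theorem card_filter_line_le_of_fst_mem {J : Finset ℤ} (hb : b ≠ 0) (hT : ∀ p ∈ T, p.1 ∈ J) :
    #{p ∈ T | a * (p.1 : ℝ) + b * (p.2 : ℝ) = d} ≤ #J := by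
  refine card_le_card_of_injOn Prod.fst (fun p hp => hT p (mem_filter.1 hp).1)
    fun p hp p' hp' (he : p.1 = p'.1) => Prod.ext he ?_
  have h := (mem_filter.1 hp).2.trans (mem_filter.1 hp').2.symm
  rw [he] at h
  exact_mod_cast mul_left_cancel₀ hb (add_left_cancel h)

theorem card_filter_line_le_of_isBiregular {X Y : Finset ℤ} {k : ℕ} (hT : T ⊆ X ×ˢ Y)
    (hreg : IsBiregular T X Y k)
    (hgen : ∀ a b d : ℝ, a ≠ 0 → b ≠ 0 → #{p ∈ T | a * (p.1 : ℝ) + b * (p.2 : ℝ) = d} ≤ k)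
    (hab : (a, b) ≠ (0, 0)) : #{p ∈ T | a * (p.1 : ℝ) + b * (p.2 : ℝ) = d} ≤ k := by
  obtain he | ⟨p₀, hp₀⟩ := {p ∈ T | a * (p.1 : ℝ) + b * (p.2 : ℝ) = d}.eq_empty_or_nonempty
  · simp [he]
  have hline : ∀ p ∈ {p ∈ T | a * (p.1 : ℝ) + b * (p.2 : ℝ) = d},
      p ∈ T ∧ a * (p.1 : ℝ) + b * (p.2 : ℝ) = a * (p₀.1 : ℝ) + b * (p₀.2 : ℝ) :=
    fun p hp => ⟨(mem_filter.1 hp).1, (mem_filter.1 hp).2.trans (mem_filter.1 hp₀).2.symm⟩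
  by_cases ha : a = 0
  · have hb : b ≠ 0 := fun hb => hab (by rw [ha, hb])
    refine (card_le_card fun p hp => ?_).trans (hreg.card_filter_snd_le hT p₀.2)
    obtain ⟨hpT, h⟩ := hline p hp
    simp only [ha, zero_mul, zero_add] at h
    exact mem_filter.2 ⟨hpT, by exact_mod_cast mul_left_cancel₀ hb h⟩
  by_cases hb : b = 0
  · refine (card_le_card fun p hp => ?_).trans (hreg.card_filter_fst_le hT p₀.1)
    obtain ⟨hpT, h⟩ := hline p hp
    simp only [hb, zero_mul, add_zero] at h
    exact mem_filter.2 ⟨hpT, by exact_mod_cast mul_left_cancel₀ ha h⟩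
  exact hgen a b d ha hb

theorem card_filter_line_extendByProjections_le {S M : Finset (ℤ × ℤ)} {J : Finset ℤ}
    {c : ℤ × ℤ → ℤ} (hc : ∀ p ∈ M, c p ∈ J) (ha : a ≠ 0) (hb : b ≠ 0) :
    #{p ∈ extendByProjections S M c | a * (p.1 : ℝ) + b * (p.2 : ℝ) = d}
      ≤ #{p ∈ S | a * (p.1 : ℝ) + b * (p.2 : ℝ) = d} + #J + #J := by
  have hcJ (φ : ℤ × ℤ → ℤ × ℤ) (g : ℤ × ℤ → ℤ) (hφ : ∀ p, g (φ p) = c p) :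
      ∀ p ∈ M.image φ, g p ∈ J := fun _ hp => by
    obtain ⟨p, hpM, rfl⟩ := mem_image.1 hp
    exact hφ p ▸ hc p hpM
  rw [extendByProjections, filter_union, filter_union]
  refine (card_union_le _ _).trans (add_le_add ((card_union_le _ _).trans (add_le_add ?_ ?_)) ?_)
  · exact card_le_card (filter_subset_filter _ sdiff_subset)
  · exact card_filter_line_le_of_snd_mem ha (hcJ _ Prod.snd fun _ => rfl)
  · exact card_filter_line_le_of_fst_mem hb (hcJ _ Prod.fst fun _ => rfl)

end Lines

theorem gridZ_eq_product (n : ℕ) : gridZ n = Icc 1 (n : ℤ) ×ˢ Icc 1 (n : ℤ) :=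
  rfl

theorem exists_isBiregular_gridZ_extension {n k q : ℕ} {S : Finset (ℤ × ℤ)} (hS : S ⊆ gridZ n)
    (hreg : IsBiregular S (Icc 1 (n : ℤ)) (Icc 1 (n : ℤ)) k) (hqk : q ≤ k) (hkn : k ≤ n) :
    ∃ T ⊆ gridZ (n + q), IsBiregular T (Icc 1 ((n + q : ℕ) : ℤ)) (Icc 1 ((n + q : ℕ) : ℤ)) k ∧
      ∀ a b d : ℝ, a ≠ 0 → b ≠ 0 → #{p ∈ T | a * (p.1 : ℝ) + b * (p.2 : ℝ) = d}
        ≤ #{p ∈ S | a * (p.1 : ℝ) + b * (p.2 : ℝ) = d} + q + q := by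
  set X := Icc (1 : ℤ) n
  set J := Icc ((n : ℤ) + 1) (n + q)
  have hSX : S ⊆ X ×ˢ X := gridZ_eq_product n ▸ hS
  have hJ : #J = q := by simp [J]
  have hXJ : Disjoint X J := disjoint_left.2 fun v hvX hvJ => by
    simp only [X, J, mem_Icc] at hvX hvJ; omega
  have hXJ' : X ∪ J = Icc 1 ((n + q : ℕ) : ℤ) := by
    ext v; simp only [X, J, mem_union, mem_Icc]; push_cast; omega
  obtain ⟨R, hRS, c, hR⟩ := hreg.exists_isOneFactorization hSX J (hJ.trans_le hqk)
  have hK : Icc (1 : ℤ) k ⊆ X := Icc_subset_Icc le_rfl (by exact_mod_cast hkn)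
  -- the rows `1..k` of each matching: partial matchings of size `k`, so each new line gets `k`
  have hM := hR.restrict (hRS.trans hSX) hK
  simp only [Int.card_Icc, add_sub_cancel_right, Int.toNat_natCast] at hM
  have hMS : {p ∈ R | p.2 ∈ Icc 1 (k : ℤ)} ⊆ S := (filter_subset _ R).trans hRS
  have hc : ∀ p ∈ {p ∈ R | p.2 ∈ Icc 1 (k : ℤ)}, c p ∈ J := fun p hp => hR.1 p (mem_filter.1 hp).1
  refine ⟨extendByProjections S {p ∈ R | p.2 ∈ Icc 1 (k : ℤ)} c, ?_, ?_, fun a b d ha hb => ?_⟩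
  · exact gridZ_eq_product _ ▸ hXJ' ▸ extendByProjections_subset hSX hMS hc
  · exact hXJ' ▸ isBiregular_extendByProjections hSX hXJ hMS hc hM hreg
  · exact hJ ▸ card_filter_line_extendByProjections_le hc ha hb

/-- Adjusting n: from a k-regular no-(k+1)-in-line set in `[1,n]²` with even reserve h,
one obtains a no-(k+1)-in-line set of size `k·n'` in `[1,n']²` for `n' = n + h/2`. -/
theorem stmt5 (n k h : ℕ) (hh : h ≤ k) (hk : k ≤ n) (hev : 2 ∣ h)
    (S : Finset (ℤ × ℤ)) (hsub : S ⊆ gridZ n)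
    (hrow : ∀ y ∈ Finset.Icc (1 : ℤ) (n : ℤ), (S.filter (fun p => p.2 = y)).card = k)
    (hcol : ∀ x ∈ Finset.Icc (1 : ℤ) (n : ℤ), (S.filter (fun p => p.1 = x)).card = k)
    (hgen : ∀ a b c : ℝ, a ≠ 0 → b ≠ 0 →
      (S.filter (fun p => a * (p.1 : ℝ) + b * (p.2 : ℝ) = c)).card ≤ k - h) :
    ∃ S'' : Finset (ℤ × ℤ), S'' ⊆ gridZ (n + h / 2) ∧
      S''.card = k * (n + h / 2) ∧
      (∀ a b c : ℝ, (a, b) ≠ (0, 0) →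
        (S''.filter (fun p => a * (p.1 : ℝ) + b * (p.2 : ℝ) = c)).card ≤ k) := by
  obtain ⟨q, rfl⟩ := hev
  rw [Nat.mul_div_cancel_left q two_pos]
  obtain ⟨T, hT, hreg, hline⟩ :=
    exists_isBiregular_gridZ_extension hsub ⟨hcol, hrow⟩ (by omega : q ≤ k) hk
  refine ⟨T, hT, ?_, fun a b d hab => card_filter_line_le_of_isBiregular hT hreg
    (fun a b d ha hb => (hline a b d ha hb).trans ?_) hab⟩
  · rw [hreg.card_eq_card_right_mul hT, Int.card_Icc, add_sub_cancel_right, Int.toNat_natCast, mul_comm]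
  · have := hgen a b d ha hb
    omega
end

section
/- Let X_1,…,X_m be indicator (Bernoulli) random variables (not necessarily independent), let 0 ≤ α < β ≤ 1 and K > 0, and let t = ⌈((β−α)/(1−α))·m⌉ with 0 < t ≤ β·m. Assume that for every subset T ⊆ {1,…,m} of size t we have P(⋂_{i∈T} {X_i = 1}) ≤ K·α^t. Then P(Σ_{i=1}^m X_i ≥ β·m) ≤ (1/C(⌊βm⌋, t))·Σ_{|T|=t} P(⋂_{i∈T}{X_i=1}), where C(·,·) denotes the binomial coefficient. -/
open scoped Classical ENNReal
open MeasureTheory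

/-- Linial–Luria generalized Chernoff bound: for indicator random variables
`X_1, …, X_m` (not necessarily independent), if every t-subset satisfies
`P(⋂ X_i = 1) ≤ K·α^t`, then
`P(Σ X_i ≥ β·m) ≤ (1/C(⌊βm⌋,t)) Σ_{|T|=t} P(⋂_{i∈T} X_i = 1)`. -/
theorem stmt9 {Ω : Type*} [MeasurableSpace Ω] (μ : Measure Ω) [IsProbabilityMeasure μ]
    (m : ℕ) (X : Fin m → Ω → ℕ)
    (hX01 : ∀ i ω, X i ω = 0 ∨ X i ω = 1)
    (hXm : ∀ i, Measurable (X i))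
    (α β K : ℝ) (h0 : 0 ≤ α) (hab : α < β) (hb1 : β ≤ 1) (hK : 0 < K)
    (t : ℕ) (ht : t = ⌈(β - α) / (1 - α) * (m : ℝ)⌉₊) (ht0 : 0 < t) (htb : (t : ℝ) ≤ β * m)
    (hsub : ∀ T : Finset (Fin m), T.card = t →
      (μ (⋂ i ∈ T, {ω | X i ω = 1})).toReal ≤ K * α ^ t) :
    (μ {ω | β * (m : ℝ) ≤ ∑ i, (X i ω : ℝ)}).toReal ≤
      (1 / (Nat.choose ⌊β * (m : ℝ)⌋₊ t : ℝ)) *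
        ∑ T ∈ Finset.univ.powersetCard t, (μ (⋂ i ∈ T, {ω | X i ω = 1})).toReal := by
  set E : Set Ω := {ω | β * (m : ℝ) ≤ ∑ i, (X i ω : ℝ)} with hEdef
  set P : Finset (Finset (Fin m)) := Finset.univ.powersetCard t with hPdef
  set C : ℕ := Nat.choose ⌊β * (m : ℝ)⌋₊ t with hCdef
  set A : Finset (Fin m) → Set Ω := fun T => ⋂ i ∈ T, {ω | X i ω = 1} with hAdef
  have hA : ∀ T, MeasurableSet (A T) := fun T =>
    MeasurableSet.biInter (Set.to_countable _) fun i _ =>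
      (hXm i) (measurableSet_singleton 1)
  have hEm : MeasurableSet E := by
    have hf : Measurable fun ω => ∑ i, (X i ω : ℝ) :=
      Finset.measurable_sum _ fun i _ => measurable_from_top.comp (hXm i)
    exact measurableSet_le measurable_const hf
  have hcount : ∀ ω ∈ E, C ≤ (P.filter (fun T => ω ∈ A T ∩ E)).card := by
    intro ω hω
    set S : Finset (Fin m) := Finset.univ.filter (fun i => X i ω = 1) with hS
    have hsum : ∑ i, (X i ω : ℝ) = S.card := by
      rw [hS, ← Finset.sum_boole]
      refine Finset.sum_congr rfl fun i _ => ?_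
      rcases hX01 i ω with h | h <;> simp [h]
    have hcard : ⌊β * (m : ℝ)⌋₊ ≤ S.card := by
      have h1 : β * m ≤ (S.card : ℝ) := by rw [← hsum]; exact hω
      have := Nat.floor_mono h1
      simpa using this
    have h1 : C ≤ Nat.choose S.card t := Nat.choose_le_choose t hcard
    have h2 : (S.powersetCard t).card = Nat.choose S.card t := S.card_powersetCard t
    have h3 : S.powersetCard t ⊆ P.filter (fun T => ω ∈ A T ∩ E) := by
      intro T hT
      rw [Finset.mem_powersetCard] at hT
      rw [Finset.mem_filter]
      refine ⟨by rw [hPdef, Finset.mem_powersetCard]; exact ⟨Finset.subset_univ T, hT.2⟩, ?_, hω⟩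
      rw [hAdef]
      simp only [Set.mem_iInter, Set.mem_setOf_eq]
      intro i hi
      have := hT.1 hi
      simpa [hS] using (Finset.mem_filter.mp this).2
    calc C ≤ Nat.choose S.card t := h1
      _ = (S.powersetCard t).card := h2.symm
      _ ≤ _ := Finset.card_le_card h3
  have key : (C : ℝ≥0∞) * μ E ≤ ∑ T ∈ P, μ (A T) := by
    calc (C : ℝ≥0∞) * μ E
        = ∫⁻ ω, (C : ℝ≥0∞) * E.indicator 1 ω ∂μ := by
          rw [lintegral_const_mul _ (measurable_one.indicator hEm),
            lintegral_indicator_one hEm]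
      _ ≤ ∫⁻ ω, ∑ T ∈ P, (A T ∩ E).indicator 1 ω ∂μ := by
          refine lintegral_mono fun ω => ?_
          by_cases hω : ω ∈ E
          · rw [Set.indicator_of_mem hω]
            simp only [Pi.one_apply, mul_one]
            have hc := hcount ω hω
            have hsum2 : ∑ T ∈ P, (A T ∩ E).indicator (1 : Ω → ℝ≥0∞) ω
                = ((P.filter (fun T => ω ∈ A T ∩ E)).card : ℝ≥0∞) := by
              rw [← Finset.sum_boole]
              exact Finset.sum_congr rfl fun T _ => by
                by_cases h : ω ∈ A T ∩ E <;> simp [Set.indicator, h]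
            rw [hsum2]
            exact_mod_cast hc
          · simp [Set.indicator_of_notMem hω]
      _ = ∑ T ∈ P, μ (A T ∩ E) := by
          rw [lintegral_finset_sum _ fun T _ => measurable_one.indicator ((hA T).inter hEm)]
          exact Finset.sum_congr rfl fun T _ => lintegral_indicator_one ((hA T).inter hEm)
      _ ≤ ∑ T ∈ P, μ (A T) :=
          Finset.sum_le_sum fun T _ => measure_mono Set.inter_subset_left
  have hCpos : 0 < C := Nat.choose_pos (Nat.le_floor htb)
  have hfin : ∀ T ∈ P, μ (A T) ≠ ⊤ := fun T _ => measure_ne_top μ _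
  have hsumfin : ∑ T ∈ P, μ (A T) ≠ ⊤ := by
    exact (ENNReal.sum_lt_top.mpr fun T hT => (hfin T hT).lt_top).ne
  have key' : (C : ℝ) * (μ E).toReal ≤ ∑ T ∈ P, (μ (A T)).toReal := by
    have := ENNReal.toReal_mono hsumfin key
    rwa [ENNReal.toReal_mul, ENNReal.toReal_natCast, ENNReal.toReal_sum hfin] at this
  have hCR : (0 : ℝ) < C := by exact_mod_cast hCpos
  rw [one_div, inv_mul_eq_div, le_div_iff₀ hCR, mul_comm]
  exact key'
end

section
/- Let n ∈ ℕ and (2/3)·n ≤ k ≤ n. Then there exists a subset S ⊆ [1,n]×[1,n] of size k·n such that every line in the plane contains at most k points of S; consequently f_k(n) = kn. -/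
open scoped Classical

/-!
Write `m = n - k`, so that `3m ≤ n`. Punch holes into the grid: exactly `m` in every row and at
least `m` in every column, including the block `[1,m]²` and an `m × m` block centred on the
antidiagonal `x + y = n + 1`. A diagonal (antidiagonal) at distance `δ < m` from the main one has
`n - δ` grid points and meets the corresponding block in `m - δ` holes. In the `n - 2m` rows and
columns missing both blocks, the holes form an `m`-regular bipartite graph (a circulant). What
remains has `kn` points and at most `k` on every horizontal, vertical, diagonal and antidiagonal
line. Any other line through two grid points has a primitive direction `(u, v)` with
`max(|u|, |v|) ≥ 2`, so it meets the grid in at most `⌈n/2⌉ ≤ k` points. The upper bound is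
pigeonhole on rows.
-/

open Finset

lemma Fin.card_filter_val_sub_right_lt {t : ℕ} [NeZero t] {m : ℕ} (hm : m ≤ t) (i : Fin t) :
    #{j : Fin t | ((j - i : Fin t) : ℕ) < m} = m := by
  rw [card_equiv (Equiv.subRight i) (t := {d : Fin t | (d : ℕ) < m}) (by simp),
    Fin.card_filter_val_lt, min_eq_right hm]

lemma Fin.card_filter_val_sub_left_lt {t : ℕ} [NeZero t] {m : ℕ} (hm : m ≤ t) (j : Fin t) :
    #{i : Fin t | ((j - i : Fin t) : ℕ) < m} = m := by
  rw [card_equiv (Equiv.subLeft j) (t := {d : Fin t | (d : ℕ) < m}) (by simp),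
    Fin.card_filter_val_lt, min_eq_right hm]

theorem exists_regular_relation {α β : Type*} (X : Finset α) (Y : Finset β) (hXY : #X = #Y)
    {m : ℕ} (hm : m ≤ #X) :
    ∃ r : α → β → Prop, (∀ x ∈ X, #{y ∈ Y | r x y} = m) ∧ ∀ y ∈ Y, #{x ∈ X | r x y} = m := by
  rcases X.eq_empty_or_nonempty with rfl | hX
  · exact ⟨fun _ _ => False, by simp, by simp [card_eq_zero.1 hXY.symm]⟩
  have : NeZero #X := ⟨hX.card_ne_zero⟩
  obtain ⟨a, ha⟩ := Function.Embedding.exists_of_card_eq_finset (α := Fin #X) (s := X) (by simp)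
  obtain ⟨b, hb⟩ :=
    Function.Embedding.exists_of_card_eq_finset (α := Fin #X) (s := Y) (by simp [hXY])
  refine ⟨fun x y => ∃ i j, a i = x ∧ b j = y ∧ ((j - i : Fin _) : ℕ) < m, ?_, ?_⟩
  all_goals
    simp only [← ha, ← hb, mem_map, mem_univ, true_and, forall_exists_index,
      forall_apply_eq_imp_iff, filter_map, card_map]
  · intro i
    simpa [a.injective.eq_iff, b.injective.eq_iff] using Fin.card_filter_val_sub_right_lt hm i
  · intro j
    simpa [a.injective.eq_iff, b.injective.eq_iff] using Fin.card_filter_val_sub_left_lt hm j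

lemma mem_gridZ {n : ℕ} {p : ℤ × ℤ} : p ∈ gridZ n ↔ p.1 ∈ Icc (1 : ℤ) n ∧ p.2 ∈ Icc (1 : ℤ) n := by
  rw [gridZ, Icc_prod_def, mem_product]

lemma swap_mem_gridZ {n : ℕ} {p : ℤ × ℤ} : p.swap ∈ gridZ n ↔ p ∈ gridZ n := by
  simp only [mem_gridZ, Prod.fst_swap, Prod.snd_swap, and_comm]

lemma Int.sub_one_mul_le_of_forall_modEq {s : Finset ℤ} {n : ℕ} {M x₀ : ℤ} (hM : 0 < M)
    (hs : s ⊆ Icc 1 (n : ℤ)) (hmod : ∀ x ∈ s, x₀ ≡ x [ZMOD M]) :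
    ((#s : ℤ) - 1) * M ≤ n - 1 := by
  have hq : -1 ≤ ((n : ℤ) - 1) / M := Int.le_ediv_of_mul_le hM (by linarith)
  have hcard : #s ≤ #(Icc 0 (((n : ℤ) - 1) / M)) := by
    refine card_le_card_of_injOn (fun x => (x - 1) / M) (fun x hx => ?_) (fun x hx y hy hxy => ?_)
    · have := mem_Icc.1 (hs hx)
      exact mem_Icc.2 ⟨Int.ediv_nonneg (by omega) hM.le, Int.ediv_le_ediv hM (by omega)⟩
    · have hr : (x - 1) % M = (y - 1) % M := ((hmod x hx).symm.trans (hmod y hy)).sub_right 1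
      have hx' := Int.mul_ediv_add_emod (x - 1) M
      have hy' := Int.mul_ediv_add_emod (y - 1) M
      rw [hr, show (x - 1) / M = (y - 1) / M from hxy] at hx'
      linarith
  rw [Int.card_Icc] at hcard
  have := Int.ediv_mul_le ((n : ℤ) - 1) hM.ne'
  nlinarith [show (#s : ℤ) - 1 ≤ ((n : ℤ) - 1) / M by omega]

lemma two_mul_card_le_of_isCoprime {n : ℕ} {T : Finset (ℤ × ℤ)} (hT : T ⊆ gridZ n) {p : ℤ × ℤ}
    {u v : ℤ} (huv : IsCoprime u v) (hu : 2 ≤ |u|)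
    (hline : ∀ r ∈ T, (r.1 - p.1) * v = (r.2 - p.2) * u) :
    2 * #T ≤ n + 1 := by
  have hu0 : u ≠ 0 := by rintro rfl; simp at hu
  have hinj : Set.InjOn Prod.fst (T : Set (ℤ × ℤ)) := by
    intro r hr r' hr' h
    have := hline r hr
    rw [h, hline r' hr'] at this
    exact Prod.ext h (by linarith [mul_right_cancel₀ hu0 this])
  have hsub : T.image Prod.fst ⊆ Icc 1 (n : ℤ) := by
    rintro _ hx
    obtain ⟨r, hr, rfl⟩ := mem_image.1 hx
    exact (mem_gridZ.1 (hT hr)).1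
  have hmod : ∀ x ∈ T.image Prod.fst, p.1 ≡ x [ZMOD |u|] := by
    rintro _ hx
    obtain ⟨r, hr, rfl⟩ := mem_image.1 hx
    exact Int.modEq_of_dvd ((abs_dvd _ _).2 (huv.dvd_of_dvd_mul_right ⟨r.2 - p.2, by
      rw [hline r hr, mul_comm]⟩))
  have hcount := Int.sub_one_mul_le_of_forall_modEq (by omega) hsub hmod
  rw [card_image_of_injOn hinj] at hcount
  have : (#T : ℤ) * 2 ≤ n + 1 := by nlinarith
  omega

lemma two_mul_card_le_of_direction_ne {n : ℕ} {T : Finset (ℤ × ℤ)} (hT : T ⊆ gridZ n) {p : ℤ × ℤ}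
    {u v : ℤ} (hu : u ≠ 0) (hv : v ≠ 0) (huv : u ≠ v) (huv' : u ≠ -v)
    (hline : ∀ r ∈ T, (r.1 - p.1) * v = (r.2 - p.2) * u) :
    2 * #T ≤ n + 1 := by
  obtain ⟨g, u, v, hg, hgcd, rfl, rfl⟩ := Int.exists_gcd_one' (Int.gcd_pos_of_ne_zero_left v hu)
  have hg0 : (g : ℤ) ≠ 0 := by positivity
  have hcop : IsCoprime u v := Int.isCoprime_iff_gcd_eq_one.2 hgcd
  have hline' : ∀ r ∈ T, (r.1 - p.1) * v = (r.2 - p.2) * u := fun r hr =>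
    mul_right_cancel₀ hg0 (by linear_combination hline r hr)
  have habs : |u| ≠ |v| := fun h => by
    rcases abs_eq_abs.1 h with rfl | rfl
    exacts [huv rfl, huv' (neg_mul _ _)]
  have hu1 := Int.one_le_abs (left_ne_zero_of_mul hu)
  have hv1 := Int.one_le_abs (left_ne_zero_of_mul hv)
  rcases lt_or_gt_of_ne habs with h | h
  · rw [← card_image_of_injective T Prod.swap_injective]
    refine two_mul_card_le_of_isCoprime (p := p.swap) (fun r hr => ?_) hcop.symm (by omega)
      (fun r hr => ?_)
    · obtain ⟨s, hs, rfl⟩ := mem_image.1 hr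
      exact swap_mem_gridZ.2 (hT hs)
    · obtain ⟨s, hs, rfl⟩ := mem_image.1 hr
      exact (hline' s hs).symm
  · exact two_mul_card_le_of_isCoprime hT hcop (by omega) hline'

lemma sub_mul_sub_eq_of_mem_line {a b c : ℝ} (hab : (a, b) ≠ (0, 0)) {p q r : ℤ × ℤ}
    (hp : a * p.1 + b * p.2 = c) (hq : a * q.1 + b * q.2 = c) (hr : a * r.1 + b * r.2 = c) :
    (r.1 - p.1) * (q.2 - p.2) = (r.2 - p.2) * (q.1 - p.1) := by
  have hab' : a ≠ 0 ∨ b ≠ 0 := by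
    by_contra! h
    exact hab (by rw [h.1, h.2])
  suffices ((r.1 - p.1) * (q.2 - p.2) : ℝ) = (r.2 - p.2) * (q.1 - p.1) by exact_mod_cast this
  rcases hab' with ha | hb
  · exact mul_left_cancel₀ ha
      (by linear_combination ((q.2 : ℝ) - p.2) * (hr - hp) - ((r.2 : ℝ) - p.2) * (hq - hp))
  · exact mul_left_cancel₀ hb
      (by linear_combination ((r.1 : ℝ) - p.1) * (hq - hp) - ((q.1 : ℝ) - p.1) * (hr - hp))

theorem card_filter_line_le {n k : ℕ} {S : Finset (ℤ × ℤ)} (hS : S ⊆ gridZ n) (hnk : n ≤ 2 * k)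
    (hrow : ∀ y : ℤ, #{p ∈ S | p.2 = y} ≤ k) (hcol : ∀ x : ℤ, #{p ∈ S | p.1 = x} ≤ k)
    (hdiag : ∀ d : ℤ, #{p ∈ S | p.1 - p.2 = d} ≤ k)
    (hanti : ∀ e : ℤ, #{p ∈ S | p.1 + p.2 = e} ≤ k) {a b c : ℝ} (hab : (a, b) ≠ (0, 0)) :
    #{p ∈ S | a * (p.1 : ℝ) + b * (p.2 : ℝ) = c} ≤ k := by
  set T := {p ∈ S | a * (p.1 : ℝ) + b * (p.2 : ℝ) = c}
  have card_le_of_forall : ∀ (Q : ℤ × ℤ → Prop) [DecidablePred Q],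
      (∀ r ∈ T, Q r) → #T ≤ #{r ∈ S | Q r} := fun Q _ hQ =>
    card_le_card fun r hr => mem_filter.2 ⟨(mem_filter.1 hr).1, hQ r hr⟩
  obtain hT | hT := le_or_gt #T 1
  · obtain ⟨p, hp⟩ := card_le_one_iff_subset_singleton.1 hT
    exact (card_le_of_forall (·.2 = p.2) fun r hr => by rw [mem_singleton.1 (hp hr)]).trans (hrow _)
  obtain ⟨p, hp, q, hq, hpq⟩ := one_lt_card.1 hT
  set u := q.1 - p.1
  set v := q.2 - p.2
  have hline : ∀ r ∈ T, (r.1 - p.1) * v = (r.2 - p.2) * u := fun r hr =>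
    sub_mul_sub_eq_of_mem_line hab (mem_filter.1 hp).2 (mem_filter.1 hq).2 (mem_filter.1 hr).2
  by_cases hu : u = 0
  · have hv : v ≠ 0 := fun hv => hpq (Prod.ext (by omega) (by omega))
    refine (card_le_of_forall (·.1 = p.1) fun r hr => ?_).trans (hcol _)
    linarith [mul_right_cancel₀ hv (by linear_combination hline r hr + (r.2 - p.2) * hu :
      (r.1 - p.1) * v = 0 * v)]
  by_cases hv : v = 0
  · refine (card_le_of_forall (·.2 = p.2) fun r hr => ?_).trans (hrow _)
    linarith [mul_right_cancel₀ hu (by linear_combination -hline r hr + (r.1 - p.1) * hv :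
      (r.2 - p.2) * u = 0 * u)]
  by_cases huv : u = v
  · refine (card_le_of_forall (fun r => r.1 - r.2 = p.1 - p.2) fun r hr => ?_).trans (hdiag _)
    linarith [mul_right_cancel₀ hu (by linear_combination hline r hr + (r.1 - p.1) * huv :
      (r.1 - p.1) * u = (r.2 - p.2) * u)]
  by_cases huv' : u = -v
  · refine (card_le_of_forall (fun r => r.1 + r.2 = p.1 + p.2) fun r hr => ?_).trans (hanti _)
    linarith [mul_right_cancel₀ hv (by linear_combination hline r hr + (r.2 - p.2) * huv' :
      (r.1 - p.1) * v = -(r.2 - p.2) * v)]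
  have hTn : T ⊆ gridZ n := (filter_subset _ S).trans hS
  have := two_mul_card_le_of_direction_ne hTn hu hv huv huv' hline
  omega

structure IsHolePattern (n m : ℕ) (P : ℤ → ℤ → Prop) : Prop where
  card_row : ∀ y ∈ Icc (1 : ℤ) n, #{x ∈ Icc (1 : ℤ) n | P x y} = m
  le_card_col : ∀ x ∈ Icc (1 : ℤ) n, m ≤ #{y ∈ Icc (1 : ℤ) n | P x y}
  diag_block : ∀ x ∈ Icc (1 : ℤ) m, ∀ y ∈ Icc (1 : ℤ) m, P x y
  antidiag_block : ∀ x ∈ Icc ((n : ℤ) - 2 * m + 1) (n - m), ∀ y ∈ Icc ((m : ℤ) + 1) (2 * m), P x y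

noncomputable def gridAvoiding (n : ℕ) (P : ℤ → ℤ → Prop) : Finset (ℤ × ℤ) :=
  {p ∈ gridZ n | ¬P p.1 p.2}

section gridAvoiding

variable {n m : ℕ} {P : ℤ → ℤ → Prop}

lemma mem_gridAvoiding {p : ℤ × ℤ} :
    p ∈ gridAvoiding n P ↔ (p.1 ∈ Icc (1 : ℤ) n ∧ p.2 ∈ Icc (1 : ℤ) n) ∧ ¬P p.1 p.2 := by
  rw [gridAvoiding, mem_filter, mem_gridZ]

lemma card_filter_gridAvoiding_snd_eq {y : ℤ} (hy : y ∈ Icc (1 : ℤ) n) :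
    #{p ∈ gridAvoiding n P | p.2 = y} = #{x ∈ Icc (1 : ℤ) n | ¬P x y} := by
  refine card_nbij' Prod.fst (·, y) (fun p hp => ?_) (fun x hx => ?_) (fun p hp => ?_)
    fun _ _ => rfl
  · simp only [mem_coe, mem_filter, mem_gridAvoiding] at hp ⊢
    exact ⟨hp.1.1.1, hp.2 ▸ hp.1.2⟩
  · simp only [mem_coe, mem_filter, mem_gridAvoiding] at hx ⊢
    exact ⟨⟨⟨hx.1, hy⟩, hx.2⟩, trivial⟩
  · simp only [mem_coe, mem_filter] at hp
    exact Prod.ext rfl hp.2.symm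

lemma card_filter_gridAvoiding_fst_eq {x : ℤ} (hx : x ∈ Icc (1 : ℤ) n) :
    #{p ∈ gridAvoiding n P | p.1 = x} = #{y ∈ Icc (1 : ℤ) n | ¬P x y} := by
  refine card_nbij' Prod.snd (x, ·) (fun p hp => ?_) (fun y hy => ?_) (fun p hp => ?_)
    fun _ _ => rfl
  · simp only [mem_coe, mem_filter, mem_gridAvoiding] at hp ⊢
    exact ⟨hp.1.1.2, hp.2 ▸ hp.1.2⟩
  · simp only [mem_coe, mem_filter, mem_gridAvoiding] at hy ⊢
    exact ⟨⟨⟨hx, hy.1⟩, hy.2⟩, trivial⟩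
  · simp only [mem_coe, mem_filter] at hp
    exact Prod.ext hp.2.symm rfl

end gridAvoiding

namespace IsHolePattern

variable {n m : ℕ} {P : ℤ → ℤ → Prop} (hP : IsHolePattern n m P)
include hP

lemma card_filter_snd_eq {y : ℤ} (hy : y ∈ Icc (1 : ℤ) n) :
    #{p ∈ gridAvoiding n P | p.2 = y} = n - m := by
  have := card_filter_add_card_filter_not (s := Icc (1 : ℤ) n) (fun x => P x y)
  rw [hP.card_row y hy, Int.card_Icc] at this
  rw [card_filter_gridAvoiding_snd_eq hy]
  omega

lemma card_gridAvoiding : #(gridAvoiding n P) = (n - m) * n := by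
  rw [card_eq_sum_card_fiberwise (f := Prod.snd) (t := Icc (1 : ℤ) n)
    fun p hp => (mem_gridAvoiding.1 hp).1.2, sum_congr rfl fun y hy => hP.card_filter_snd_eq hy,
    sum_const, Int.card_Icc, smul_eq_mul]
  simp [mul_comm]

lemma card_filter_snd_eq_le (y : ℤ) : #{p ∈ gridAvoiding n P | p.2 = y} ≤ n - m := by
  by_cases hy : y ∈ Icc (1 : ℤ) n
  · exact (hP.card_filter_snd_eq hy).le
  · rw [filter_false_of_mem fun p hp (h : p.2 = y) => hy (h ▸ (mem_gridAvoiding.1 hp).1.2)]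
    simp

lemma card_filter_fst_eq_le (x : ℤ) : #{p ∈ gridAvoiding n P | p.1 = x} ≤ n - m := by
  by_cases hx : x ∈ Icc (1 : ℤ) n
  · rw [card_filter_gridAvoiding_fst_eq hx]
    have := hP.le_card_col x hx
    have := card_filter_add_card_filter_not (s := Icc (1 : ℤ) n) (fun y => P x y)
    rw [Int.card_Icc] at this
    omega
  · rw [filter_false_of_mem fun p hp (h : p.1 = x) => hx (h ▸ (mem_gridAvoiding.1 hp).1.1)]
    simp

lemma card_filter_sub_eq_le (d : ℤ) : #{p ∈ gridAvoiding n P | p.1 - p.2 = d} ≤ n - m := by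
  calc _ ≤ #(Icc (min (m : ℤ) (m - d) + 1) (min (n : ℤ) (n - d))) := by
        refine card_le_card_of_injOn Prod.snd (fun p hp => ?_) (fun p hp q hq h => ?_)
        · simp only [mem_coe, mem_filter, mem_gridAvoiding, mem_Icc] at hp
          have : ¬(p.1 ≤ m ∧ p.2 ≤ m) := fun h =>
            hp.1.2 (hP.diag_block _ (mem_Icc.2 ⟨hp.1.1.1.1, h.1⟩) _ (mem_Icc.2 ⟨hp.1.1.2.1, h.2⟩))
          simp only [mem_coe, mem_Icc]
          omega
        · simp only [mem_coe, mem_filter] at hp hq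
          exact Prod.ext (by omega) h
    _ ≤ n - m := by rw [Int.card_Icc]; omega

lemma card_filter_add_eq_le (hmn : 2 * m ≤ n) (e : ℤ) :
    #{p ∈ gridAvoiding n P | p.1 + p.2 = e} ≤ n - m := by
  set L := Icc (max 1 (e - n)) (min (n : ℤ) (e - 1))
  set J := Icc (max ((m : ℤ) + 1) (e - n + m)) (min (2 * (m : ℤ)) (e - n + 2 * m - 1))
  have hJL : J ⊆ L := Icc_subset_Icc (by omega) (by omega)
  calc _ ≤ #(L \ J) := by
        refine card_le_card_of_injOn Prod.snd (fun p hp => ?_) (fun p hp q hq h => ?_)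
        · simp only [mem_coe, mem_filter, mem_gridAvoiding, mem_Icc] at hp
          have : ¬(e - n + m ≤ p.2 ∧ p.2 ≤ e - n + 2 * m - 1 ∧ m + 1 ≤ p.2 ∧ p.2 ≤ 2 * m) :=
            fun h => hp.1.2 (hP.antidiag_block _ (mem_Icc.2 ⟨by omega, by omega⟩) _
              (mem_Icc.2 ⟨h.2.2.1, h.2.2.2⟩))
          simp only [mem_coe, L, J, mem_sdiff, mem_Icc]
          omega
        · simp only [mem_coe, mem_filter] at hp hq
          exact Prod.ext (by omega) h
    _ = #L - #J := card_sdiff_of_subset hJL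
    _ ≤ n - m := by simp only [L, J, Int.card_Icc]; omega

end IsHolePattern

noncomputable def freeCols (n m : ℕ) : Finset ℤ :=
  Icc 1 (n : ℤ) \ (Icc 1 (m : ℤ) ∪ Icc ((n : ℤ) - 2 * m + 1) (n - m))

def blockPattern (n m : ℕ) (r : ℤ → ℤ → Prop) (x y : ℤ) : Prop :=
  (x ∈ Icc 1 (m : ℤ) ∧ y ∈ Icc 1 (m : ℤ)) ∨
    (x ∈ Icc ((n : ℤ) - 2 * m + 1) (n - m) ∧ y ∈ Icc ((m : ℤ) + 1) (2 * m)) ∨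
    (x ∈ freeCols n m ∧ y ∈ Icc (2 * (m : ℤ) + 1) n ∧ r x y)

lemma card_freeCols {n m : ℕ} (h : 3 * m ≤ n) : #(freeCols n m) = n - 2 * m := by
  rw [freeCols, card_sdiff_of_subset (union_subset (Icc_subset_Icc le_rfl (by omega))
      (Icc_subset_Icc (by omega) (by omega))),
    card_union_of_disjoint (disjoint_left.2 fun x hx hx' => by
      rw [mem_Icc] at hx hx'; omega)]
  simp only [Int.card_Icc]
  omega

lemma isHolePattern_blockPattern {n m : ℕ} (h : 3 * m ≤ n) {r : ℤ → ℤ → Prop}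
    (hr_col : ∀ x ∈ freeCols n m, #{y ∈ Icc (2 * (m : ℤ) + 1) n | r x y} = m)
    (hr_row : ∀ y ∈ Icc (2 * (m : ℤ) + 1) n, #{x ∈ freeCols n m | r x y} = m) :
    IsHolePattern n m (blockPattern n m r) where
  card_row y hy := by
    rw [mem_Icc] at hy
    rcases le_or_gt y m with hy₁ | hy₁
    · rw [show {x ∈ Icc 1 (n : ℤ) | blockPattern n m r x y} = Icc 1 (m : ℤ) by
        ext x
        simp only [mem_filter, blockPattern, freeCols, mem_Icc, mem_sdiff, mem_union]
        omega, Int.card_Icc]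
      omega
    rcases le_or_gt y (2 * m) with hy₂ | hy₂
    · rw [show {x ∈ Icc 1 (n : ℤ) | blockPattern n m r x y} = Icc ((n : ℤ) - 2 * m + 1) (n - m) by
        ext x
        simp only [mem_filter, blockPattern, freeCols, mem_Icc, mem_sdiff, mem_union]
        omega, Int.card_Icc]
      omega
    · have hy₁' : y ∉ Icc 1 (m : ℤ) := by rw [mem_Icc]; omega
      have hy₂' : y ∉ Icc ((m : ℤ) + 1) (2 * m) := by rw [mem_Icc]; omega
      have hy₃ : y ∈ Icc (2 * (m : ℤ) + 1) n := by rw [mem_Icc]; omega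
      refine (congrArg card ?_).trans (hr_row y hy₃)
      ext x
      simp only [mem_filter, blockPattern, hy₁', hy₂', hy₃, and_false, false_or, true_and]
      exact ⟨fun h => h.2, fun h => ⟨(mem_sdiff.1 h.1).1, h⟩⟩
  le_card_col x hx := by
    rw [mem_Icc] at hx
    rcases le_or_gt x m with hx₁ | hx₁
    · calc m = #(Icc 1 (m : ℤ)) := by simp
        _ ≤ _ := card_le_card fun y hy => by
          rw [mem_Icc] at hy
          exact mem_filter.2 ⟨mem_Icc.2 (by omega), Or.inl ⟨mem_Icc.2 (by omega), mem_Icc.2 hy⟩⟩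
    by_cases hx₂ : (n : ℤ) - 2 * m + 1 ≤ x ∧ x ≤ n - m
    · calc m = #(Icc ((m : ℤ) + 1) (2 * m)) := by simp only [Int.card_Icc]; omega
        _ ≤ _ := card_le_card fun y hy => by
          rw [mem_Icc] at hy
          exact mem_filter.2 ⟨mem_Icc.2 (by omega), Or.inr (Or.inl ⟨mem_Icc.2 hx₂, mem_Icc.2 hy⟩)⟩
    · have hxF : x ∈ freeCols n m := by
        simp only [freeCols, mem_sdiff, mem_union, mem_Icc]
        omega
      refine (hr_col x hxF).ge.trans (card_le_card fun y hy => ?_)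
      obtain ⟨hy, hr⟩ := mem_filter.1 hy
      rw [mem_Icc] at hy
      exact mem_filter.2 ⟨mem_Icc.2 (by omega), Or.inr (Or.inr ⟨hxF, mem_Icc.2 hy, hr⟩)⟩
  diag_block _ hx _ hy := Or.inl ⟨hx, hy⟩
  antidiag_block _ hx _ hy := Or.inr (Or.inl ⟨hx, hy⟩)

theorem exists_isHolePattern {n m : ℕ} (h : 3 * m ≤ n) : ∃ P, IsHolePattern n m P := by
  have hF := card_freeCols h
  obtain ⟨r, hr_col, hr_row⟩ := exists_regular_relation (m := m) (freeCols n m)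
    (Icc (2 * (m : ℤ) + 1) n) (by rw [hF, Int.card_Icc]; omega) (by omega)
  exact ⟨_, isHolePattern_blockPattern h hr_col hr_row⟩

theorem card_le_mul_of_card_filter_snd_eq_le {n k : ℕ} {S : Finset (ℤ × ℤ)} (hS : S ⊆ gridZ n)
    (h : ∀ y : ℤ, #{p ∈ S | p.2 = y} ≤ k) : #S ≤ k * n := by
  simpa using card_le_mul_card_image_of_maps_to (fun p hp => (mem_gridZ.1 (hS hp)).2) k
    fun y _ => h y

/-- For `(2/3)n ≤ k ≤ n` there is a no-(k+1)-in-line set of size `k·n` in `[1,n]²`;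
together with the pigeonhole upper bound, `f_k(n) = k·n`. -/
theorem stmt15 (n k : ℕ) (h1 : 2 * n ≤ 3 * k) (h2 : k ≤ n) :
    (∃ S : Finset (ℤ × ℤ), S ⊆ gridZ n ∧ S.card = k * n ∧
      ∀ a b c : ℝ, (a, b) ≠ (0, 0) →
        (S.filter (fun p => a * (p.1 : ℝ) + b * (p.2 : ℝ) = c)).card ≤ k) ∧
    (∀ S : Finset (ℤ × ℤ), S ⊆ gridZ n →
      (∀ a b c : ℝ, (a, b) ≠ (0, 0) →
        (S.filter (fun p => a * (p.1 : ℝ) + b * (p.2 : ℝ) = c)).card ≤ k) →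
      S.card ≤ k * n) := by
  obtain ⟨P, hP⟩ := exists_isHolePattern (m := n - k) (n := n) (by omega)
  have hk : n - (n - k) = k := by omega
  refine ⟨⟨gridAvoiding n P, filter_subset _ _, by rw [hP.card_gridAvoiding, hk],
    fun a b c hab => ?_⟩, fun S hS hline => card_le_mul_of_card_filter_snd_eq_le hS fun y => ?_⟩
  · rw [← hk]
    exact card_filter_line_le (filter_subset _ _) (by omega) hP.card_filter_snd_eq_le
      hP.card_filter_fst_eq_le hP.card_filter_sub_eq_le (hP.card_filter_add_eq_le (by omega)) hab
  · simpa using hline 0 1 y (by simp)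
end
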